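/- arXiv:2407.11726 — 4 statements merged into one kernel-verified Lean document; each statement's English description precedes it below -/
import Mathlib

section
/- Let g_l, g_k ∈ ℂ^N be nonzero and linearly independent, and let g_i ∈ ℂ^N be nonzero. Then the generalized coherence satisfies 0 ≤ C̃(g_l, g_k, g_i) ≤ 1. -/
/-!
With `v = ⟨g_i, g_k⟩ g_l - ⟨g_i, g_l⟩ g_k`, the denominator of `C̃` is
`‖g_i‖² (‖g_l‖² ‖g_k‖² - |⟨g_l, g_k⟩|²)`, and expanding the `3 × 3` Gram determinant of
`(g_l, g_k, g_i)` shows that it equals this denominator minus `‖v‖²`. Gram matrices are positive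
semidefinite, so `0 ≤ ‖v‖² ≤ ‖g_i‖² (‖g_l‖² ‖g_k‖² - |⟨g_l, g_k⟩|²)`.
-/

/-- The coherence of two vectors in ℂ^N:
`C(g, k) = |⟨g, k⟩|² / (‖g‖² ‖k‖²)`. -/
noncomputable def coh {N : ℕ} (g k : EuclideanSpace ℂ (Fin N)) : ℝ :=
  ‖(inner ℂ g k : ℂ)‖ ^ 2 / (‖g‖ ^ 2 * ‖k‖ ^ 2)

/-- The generalized coherence of three vectors in ℂ^N:
`C̃(g_l, g_k, g_i) = ‖g_l ⟨g_i, g_k⟩ − g_k ⟨g_i, g_l⟩‖² / (‖g_l‖² ‖g_k‖² ‖g_i‖² (1 − C(g_l, g_k)))`. -/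
noncomputable def gcoh {N : ℕ} (gl gk gi : EuclideanSpace ℂ (Fin N)) : ℝ :=
  ‖(inner ℂ gi gk : ℂ) • gl - (inner ℂ gi gl : ℂ) • gk‖ ^ 2 /
    (‖gl‖ ^ 2 * ‖gk‖ ^ 2 * ‖gi‖ ^ 2 * (1 - coh gl gk))

open scoped InnerProductSpace

section GramDeterminant

variable {𝕜 E : Type*} [RCLike 𝕜] [SeminormedAddCommGroup E] [InnerProductSpace 𝕜 E]

theorem det_gram_fin_three (x y z : E) :
    (Matrix.gram 𝕜 ![x, y, z]).det =
      ((‖z‖ ^ 2 * (‖x‖ ^ 2 * ‖y‖ ^ 2 - ‖⟪x, y⟫_𝕜‖ ^ 2) -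
        ‖⟪z, y⟫_𝕜 • x - ⟪z, x⟫_𝕜 • y‖ ^ 2 : ℝ) : 𝕜) := by
  push_cast
  rw [← RCLike.mul_conj, inner_conj_symm]
  simp only [← inner_self_eq_norm_sq_to_K, Matrix.det_fin_three, Matrix.gram_apply,
    Matrix.cons_val_zero, Matrix.cons_val_one, Matrix.cons_val_two, Matrix.head_cons,
    Matrix.tail_cons, inner_sub_left, inner_sub_right, inner_smul_left, inner_smul_right,
    inner_conj_symm]
  ring

variable (𝕜) in
theorem norm_sq_inner_smul_sub_inner_smul_le (x y z : E) :
    ‖⟪z, y⟫_𝕜 • x - ⟪z, x⟫_𝕜 • y‖ ^ 2 ≤ ‖z‖ ^ 2 * (‖x‖ ^ 2 * ‖y‖ ^ 2 - ‖⟪x, y⟫_𝕜‖ ^ 2) := by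
  have := (Matrix.posSemidef_gram 𝕜 ![x, y, z]).det_nonneg
  rw [det_gram_fin_three, RCLike.ofReal_nonneg] at this
  linarith

end GramDeterminant

theorem mul_one_sub_coh {N : ℕ} (g k : EuclideanSpace ℂ (Fin N)) :
    ‖g‖ ^ 2 * ‖k‖ ^ 2 * (1 - coh g k) = ‖g‖ ^ 2 * ‖k‖ ^ 2 - ‖⟪g, k⟫_ℂ‖ ^ 2 := by
  -- When `‖g‖ ‖k‖ = 0` the division in `coh` returns `0`, but then `⟪g, k⟫ = 0` by Cauchy–Schwarz.
  refine (mul_one_sub _ _).trans (congrArg _ (mul_div_cancel_of_imp' fun h => ?_))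
  rw [← mul_pow, pow_eq_zero_iff two_ne_zero] at h
  have hcs := h ▸ norm_inner_le_norm (𝕜 := ℂ) g k
  simp [le_antisymm hcs (norm_nonneg _)]

theorem generalized_coherence_mem_Icc_general {N : ℕ} (gl gk gi : EuclideanSpace ℂ (Fin N)) :
    0 ≤ gcoh gl gk gi ∧ gcoh gl gk gi ≤ 1 := by
  have hden : ‖gl‖ ^ 2 * ‖gk‖ ^ 2 * ‖gi‖ ^ 2 * (1 - coh gl gk) =
      ‖gi‖ ^ 2 * (‖gl‖ ^ 2 * ‖gk‖ ^ 2 - ‖⟪gl, gk⟫_ℂ‖ ^ 2) := by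
    rw [mul_right_comm, mul_one_sub_coh, mul_comm]
  have hle := norm_sq_inner_smul_sub_inner_smul_le ℂ gl gk gi
  have hden_nonneg := (sq_nonneg _).trans hle
  rw [gcoh, hden]
  exact ⟨div_nonneg (sq_nonneg _) hden_nonneg, div_le_one_of_le₀ hle hden_nonneg⟩

theorem generalized_coherence_mem_Icc {N : ℕ} (gl gk gi : EuclideanSpace ℂ (Fin N))
    (hgl : gl ≠ 0) (hgk : gk ≠ 0) (hli : LinearIndependent ℂ ![gl, gk]) (hgi : gi ≠ 0) :
    0 ≤ gcoh gl gk gi ∧ gcoh gl gk gi ≤ 1 :=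
  generalized_coherence_mem_Icc_general gl gk gi
end

section
/- Let g_1, g_2 ∈ ℂ^N be nonzero and linearly independent, let g_3 ∈ ℂ^N be nonzero, and let P_2 be the orthogonal projection of ℂ^N onto the two-dimensional subspace spanned by g_1 and g_2. Then ⟨g_3, (I − P_2) g_3⟩ = ‖g_3‖² (1 − C̃(g_1, g_2, g_3)). In particular, the non-centrality parameter μ_3 = (4 / (σ² ⟨g_3,(I−P_2)g_3⟩)) · |⟨g_3, (I − P_2) g_3⟩ α_3|² of the third target equals (4 ‖g_3‖² (1 − C̃(g_1, g_2, g_3)) / σ²) · |α_3|² for any α_3 ∈ ℂ and σ > 0, provided C̃(g_1, g_2, g_3) ≠ 1. -/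
open scoped InnerProductSpace

section

variable {𝕜 E : Type*} [RCLike 𝕜] [NormedAddCommGroup E] [InnerProductSpace 𝕜 E]

theorem Matrix.det_gram_fin_two (u v : E) :
    (Matrix.gram 𝕜 ![u, v]).det = ((‖u‖ ^ 2 * ‖v‖ ^ 2 - ‖⟪u, v⟫_𝕜‖ ^ 2 : ℝ) : 𝕜) := by
  rw [Matrix.det_fin_two]
  simp only [Matrix.gram_apply, Matrix.cons_val_zero, Matrix.cons_val_one,
    inner_self_eq_norm_sq_to_K]
  rw [← inner_conj_symm v u, RCLike.mul_conj]
  push_cast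
  ring

theorem LinearIndependent.norm_sq_mul_norm_sq_sub_norm_inner_sq_ne_zero {u v : E}
    (h : LinearIndependent 𝕜 ![u, v]) : ‖u‖ ^ 2 * ‖v‖ ^ 2 - ‖⟪u, v⟫_𝕜‖ ^ 2 ≠ 0 := by
  have := (Matrix.det_gram_ne_zero_iff_linearIndependent (𝕜 := 𝕜)).2 h
  rw [Matrix.det_gram_fin_two] at this
  exact_mod_cast this

theorem norm_inner_smul_sub_inner_smul_sq_of_mem_span_pair {u v p : E}
    (hp : p ∈ Submodule.span 𝕜 {u, v}) :
    ‖⟪p, v⟫_𝕜 • u - ⟪p, u⟫_𝕜 • v‖ ^ 2 = (‖u‖ ^ 2 * ‖v‖ ^ 2 - ‖⟪u, v⟫_𝕜‖ ^ 2) * ‖p‖ ^ 2 := by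
  obtain ⟨a, b, rfl⟩ := Submodule.mem_span_pair.1 hp
  apply RCLike.ofReal_injective (K := 𝕜)
  push_cast
  rw [← RCLike.mul_conj, inner_conj_symm]
  simp only [← inner_self_eq_norm_sq_to_K, inner_sub_left, inner_sub_right, inner_add_left,
    inner_add_right, inner_smul_left, inner_smul_right, map_add, map_mul, RCLike.conj_conj,
    inner_conj_symm]
  ring

theorem Submodule.inner_self_sub_starProjection (K : Submodule 𝕜 E) [K.HasOrthogonalProjection]
    (x : E) : ⟪x, x - K.starProjection x⟫_𝕜 = ((‖x‖ ^ 2 - ‖K.starProjection x‖ ^ 2 : ℝ) : 𝕜) := by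
  set p := K.starProjection x
  have hperp : ⟪p, x - p⟫_𝕜 = 0 := by
    rw [← inner_conj_symm, K.starProjection_inner_eq_zero x p (K.starProjection_apply_mem x),
      map_zero]
  have hpyth : ‖x‖ ^ 2 = ‖p‖ ^ 2 + ‖x - p‖ ^ 2 := by
    simpa only [sq, add_sub_cancel] using
      norm_add_sq_eq_norm_sq_add_norm_sq_of_inner_eq_zero _ _ hperp
  calc ⟪x, x - p⟫_𝕜 = ⟪p + (x - p), x - p⟫_𝕜 := by rw [add_sub_cancel]
    _ = (‖x - p‖ : 𝕜) ^ 2 := by rw [inner_add_left, hperp, zero_add, inner_self_eq_norm_sq_to_K]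
    _ = _ := by rw [hpyth]; push_cast; ring

end

theorem norm_sq_mul_norm_sq_mul_one_sub_coh {N : ℕ} (u v : EuclideanSpace ℂ (Fin N)) :
    ‖u‖ ^ 2 * ‖v‖ ^ 2 * (1 - coh u v) = ‖u‖ ^ 2 * ‖v‖ ^ 2 - ‖⟪u, v⟫_ℂ‖ ^ 2 := by
  rcases eq_or_ne u 0 with rfl | hu
  · simp
  rcases eq_or_ne v 0 with rfl | hv
  · simp
  unfold coh
  field_simp

theorem gcoh_eq_div {N : ℕ} (u v x : EuclideanSpace ℂ (Fin N)) :
    gcoh u v x = ‖⟪x, v⟫_ℂ • u - ⟪x, u⟫_ℂ • v‖ ^ 2 /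
      (‖x‖ ^ 2 * (‖u‖ ^ 2 * ‖v‖ ^ 2 - ‖⟪u, v⟫_ℂ‖ ^ 2)) := by
  rw [gcoh, ← norm_sq_mul_norm_sq_mul_one_sub_coh]
  ring

theorem sq_norm_mul_gcoh {N : ℕ} {u v : EuclideanSpace ℂ (Fin N)}
    (h : LinearIndependent ℂ ![u, v]) (x : EuclideanSpace ℂ (Fin N)) :
    ‖x‖ ^ 2 * gcoh u v x = ‖(Submodule.span ℂ {u, v}).starProjection x‖ ^ 2 := by
  set K := Submodule.span ℂ {u, v}
  have inner_starProjection_eq {y : EuclideanSpace ℂ (Fin N)} (hy : y ∈ K) :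
      ⟪K.starProjection x, y⟫_ℂ = ⟪x, y⟫_ℂ := by
    rw [K.inner_starProjection_left_eq_right, K.starProjection_eq_self_iff.2 hy]
  rcases eq_or_ne x 0 with rfl | hx
  · simp
  rw [gcoh_eq_div, ← inner_starProjection_eq (Submodule.subset_span (by simp) : u ∈ K),
    ← inner_starProjection_eq (Submodule.subset_span (by simp) : v ∈ K),
    norm_inner_smul_sub_inner_smul_sq_of_mem_span_pair (K.starProjection_apply_mem x)]
  have hΓ := h.norm_sq_mul_norm_sq_sub_norm_inner_sq_ne_zero
  field_simp

theorem inner_self_sub_starProjection_span_pair {N : ℕ} {u v : EuclideanSpace ℂ (Fin N)}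
    (h : LinearIndependent ℂ ![u, v]) (x : EuclideanSpace ℂ (Fin N)) :
    ⟪x, x - (Submodule.span ℂ {u, v}).starProjection x⟫_ℂ =
      ((‖x‖ ^ 2 * (1 - gcoh u v x) : ℝ) : ℂ) := by
  rw [Submodule.inner_self_sub_starProjection, ← sq_norm_mul_gcoh h, mul_one_sub]
  norm_cast

theorem ofReal_div_mul_norm_ofReal_mul_sq (a b G : ℝ) (z : ℂ) :
    (a : ℂ) / (b * G) * ((‖(G : ℂ) * z‖ ^ 2 : ℝ) : ℂ) = ((a * G / b * ‖z‖ ^ 2 : ℝ) : ℂ) := by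
  rw [norm_mul, Complex.norm_real, Real.norm_eq_abs, mul_pow, sq_abs]
  rcases eq_or_ne G 0 with rfl | hG
  · simp
  rcases eq_or_ne b 0 with rfl | hb
  · simp
  push_cast
  field_simp

theorem quadform_two_dim_projection_and_noncentrality_general {N : ℕ}
    (g₁ g₂ g₃ : EuclideanSpace ℂ (Fin N))
    (hli : LinearIndependent ℂ ![g₁, g₂]) :
    let r : EuclideanSpace ℂ (Fin N) :=
      g₃ - (Submodule.orthogonalProjectionOnto (Submodule.span ℂ ({g₁, g₂} : Set (EuclideanSpace ℂ (Fin N)))) g₃ :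
        EuclideanSpace ℂ (Fin N))
    (inner ℂ g₃ r : ℂ) = ((‖g₃‖ ^ 2 * (1 - gcoh g₁ g₂ g₃) : ℝ) : ℂ) ∧
    (gcoh g₁ g₂ g₃ ≠ 1 → ∀ (α₃ : ℂ) (σ : ℝ), 0 < σ →
      (4 / ((σ : ℂ) ^ 2 * (inner ℂ g₃ r : ℂ))) * (((‖(inner ℂ g₃ r : ℂ) * α₃‖ ^ 2 : ℝ)) : ℂ)
        = ((4 * ‖g₃‖ ^ 2 * (1 - gcoh g₁ g₂ g₃) / σ ^ 2 * ‖α₃‖ ^ 2 : ℝ) : ℂ)) := by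
  intro r
  have hquad : ⟪g₃, r⟫_ℂ = ((‖g₃‖ ^ 2 * (1 - gcoh g₁ g₂ g₃) : ℝ) : ℂ) := by
    rw [← inner_self_sub_starProjection_span_pair hli g₃, Submodule.starProjection_apply]
  refine ⟨hquad, fun _ α₃ σ _ => ?_⟩
  have hμ := ofReal_div_mul_norm_ofReal_mul_sq 4 (σ ^ 2) (‖g₃‖ ^ 2 * (1 - gcoh g₁ g₂ g₃)) α₃
  rw [Complex.ofReal_ofNat, Complex.ofReal_pow, ← mul_assoc] at hμ
  rwa [hquad]

theorem quadform_two_dim_projection_and_noncentrality {N : ℕ}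
    (g₁ g₂ g₃ : EuclideanSpace ℂ (Fin N))
    (h₁ : g₁ ≠ 0) (h₂ : g₂ ≠ 0) (hli : LinearIndependent ℂ ![g₁, g₂]) (h₃ : g₃ ≠ 0) :
    let r : EuclideanSpace ℂ (Fin N) :=
      g₃ - (Submodule.orthogonalProjectionOnto (Submodule.span ℂ ({g₁, g₂} : Set (EuclideanSpace ℂ (Fin N)))) g₃ :
        EuclideanSpace ℂ (Fin N))
    (inner ℂ g₃ r : ℂ) = ((‖g₃‖ ^ 2 * (1 - gcoh g₁ g₂ g₃) : ℝ) : ℂ) ∧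
    (gcoh g₁ g₂ g₃ ≠ 1 → ∀ (α₃ : ℂ) (σ : ℝ), 0 < σ →
      (4 / ((σ : ℂ) ^ 2 * (inner ℂ g₃ r : ℂ))) * (((‖(inner ℂ g₃ r : ℂ) * α₃‖ ^ 2 : ℝ)) : ℂ)
        = ((4 * ‖g₃‖ ^ 2 * (1 - gcoh g₁ g₂ g₃) / σ ^ 2 * ‖α₃‖ ^ 2 : ℝ) : ℂ)) :=
  quadform_two_dim_projection_and_noncentrality_general g₁ g₂ g₃ hli
end

section
/- Let g_1, g_2 ∈ ℂ^N be nonzero and linearly independent, let g_3 ∈ ℂ^N, let α_2, α_3 ∈ ℂ, let σ > 0, and let P_1 be the orthogonal projection of ℂ^N onto span{g_1}. Then the non-centrality parameter of the second target, μ_2 := (4 / (σ² ⟨g_2, (I−P_1) g_2⟩)) · |⟨g_2, (I − P_1)(α_2 g_2 + α_3 g_3)⟩|², equals (4 ‖g_2‖² (1 − C(g_1, g_2)) / σ²) · |α_2 + α_3 (‖g_1‖² ⟨g_2, g_3⟩ − ⟨g_2, g_1⟩ ⟨g_1, g_3⟩) / (‖g_1‖² ‖g_2‖² (1 − C(g_1,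 g_2)))|². -/
/-- The orthogonal projection onto span{g₁}. -/
noncomputable def proj1 {N : ℕ} (g₁ x : EuclideanSpace ℂ (Fin N)) : EuclideanSpace ℂ (Fin N) :=
  ((inner ℂ g₁ x : ℂ) / (‖g₁‖ ^ 2 : ℂ)) • g₁

/-!
Both sides are built from the linear form `x ↦ ⟪g₂, (I - P₁) x⟫`. On `g₂` it takes the real value
`c = ‖g₂‖² (1 - C(g₁, g₂)) = (‖g₁‖²‖g₂‖² - |⟪g₁, g₂⟫|²) / ‖g₁‖²`, which is positive by the strict
Cauchy–Schwarz inequality for linearly independent vectors. On `α₂ g₂ + α₃ g₃` it equals `c · z`,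
where `z` is the bracket on the right-hand side, so the left-hand side is
`4 / (σ² c) · c² |z|² = 4 c |z|² / σ²`.
-/

theorem sq_norm_inner_lt_of_linearIndependent {𝕜 E : Type*} [RCLike 𝕜] [NormedAddCommGroup E]
    [InnerProductSpace 𝕜 E] {x y : E} (h : LinearIndependent 𝕜 ![x, y]) :
    ‖inner 𝕜 x y‖ ^ 2 < ‖x‖ ^ 2 * ‖y‖ ^ 2 := by
  have hne : ‖inner 𝕜 x y‖ ≠ ‖x‖ * ‖y‖ := by
    rw [Ne, norm_inner_eq_norm_iff (by simpa using h.ne_zero 0) (by simpa using h.ne_zero 1)]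
    rintro ⟨r, -, rfl⟩
    simpa using LinearIndependent.pair_iff.1 h r (-1) (by simp)
  rw [← mul_pow]
  exact pow_lt_pow_left₀ ((norm_inner_le_norm x y).lt_of_ne hne) (norm_nonneg _) two_ne_zero

section

variable {N : ℕ}

theorem sq_norm_mul_sq_norm_mul_one_sub_coh (g k : EuclideanSpace ℂ (Fin N)) :
    ‖g‖ ^ 2 * ‖k‖ ^ 2 * (1 - coh g k) = ‖g‖ ^ 2 * ‖k‖ ^ 2 - ‖(inner ℂ g k : ℂ)‖ ^ 2 := by
  have hcs : ‖(inner ℂ g k : ℂ)‖ ^ 2 ≤ ‖g‖ ^ 2 * ‖k‖ ^ 2 := by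
    rw [← mul_pow]
    gcongr
    exact norm_inner_le_norm g k
  rw [coh, mul_one_sub, mul_div_cancel_of_imp']
  intro h
  exact le_antisymm (h ▸ hcs) (by positivity)

theorem coh_lt_one {g k : EuclideanSpace ℂ (Fin N)} (h : LinearIndependent ℂ ![g, k]) :
    coh g k < 1 := by
  have hg : g ≠ 0 := by simpa using h.ne_zero 0
  have hk : k ≠ 0 := by simpa using h.ne_zero 1
  rw [coh, div_lt_one (by positivity)]
  exact sq_norm_inner_lt_of_linearIndependent h

theorem inner_sub_proj1 (g₁ g₂ x : EuclideanSpace ℂ (Fin N)) :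
    inner ℂ g₂ (x - proj1 g₁ x)
      = inner ℂ g₂ x - inner ℂ g₂ g₁ * inner ℂ g₁ x / (‖g₁‖ : ℂ) ^ 2 := by
  rw [proj1, inner_sub_right, inner_smul_right]
  ring

theorem inner_sub_proj1_smul_add_smul (g₁ g₂ x y : EuclideanSpace ℂ (Fin N)) (a b : ℂ) :
    inner ℂ g₂ ((a • x + b • y) - proj1 g₁ (a • x + b • y))
      = a * inner ℂ g₂ (x - proj1 g₁ x) + b * inner ℂ g₂ (y - proj1 g₁ y) := by
  simp only [inner_sub_proj1, inner_add_right, inner_smul_right]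
  ring

theorem inner_sub_proj1_self {g₁ : EuclideanSpace ℂ (Fin N)} (hg₁ : g₁ ≠ 0)
    (g₂ : EuclideanSpace ℂ (Fin N)) :
    inner ℂ g₂ (g₂ - proj1 g₁ g₂) = ((‖g₂‖ ^ 2 * (1 - coh g₁ g₂) : ℝ) : ℂ) := by
  have key := congrArg (fun r : ℝ => (r : ℂ)) (sq_norm_mul_sq_norm_mul_one_sub_coh g₁ g₂)
  have hg₁' : (‖g₁‖ : ℂ) ≠ 0 := by simpa using hg₁
  push_cast at key ⊢
  rw [inner_sub_proj1, inner_self_eq_norm_sq_to_K, ← inner_conj_symm g₁ g₂, Complex.mul_conj',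
    norm_inner_symm]
  field_simp
  linear_combination -key

end

theorem noncentrality_second_target_general {N : ℕ} (g₁ g₂ g₃ : EuclideanSpace ℂ (Fin N))
    (hli : LinearIndependent ℂ ![g₁, g₂])
    (α₂ α₃ : ℂ) (σ : ℝ) :
    let s : EuclideanSpace ℂ (Fin N) := α₂ • g₂ + α₃ • g₃
    (4 / ((σ : ℂ) ^ 2 * (inner ℂ g₂ (g₂ - proj1 g₁ g₂) : ℂ)))
        * ((‖(inner ℂ g₂ (s - proj1 g₁ s) : ℂ)‖ ^ 2 : ℝ) : ℂ)
      = ((4 * ‖g₂‖ ^ 2 * (1 - coh g₁ g₂) / σ ^ 2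
          * ‖α₂ + α₃ * ((((‖g₁‖ ^ 2 : ℝ) : ℂ) * (inner ℂ g₂ g₃ : ℂ)
              - (inner ℂ g₂ g₁ : ℂ) * (inner ℂ g₁ g₃ : ℂ))
            / ((‖g₁‖ ^ 2 * ‖g₂‖ ^ 2 * (1 - coh g₁ g₂) : ℝ) : ℂ))‖ ^ 2 : ℝ) : ℂ) := by
  intro s
  have hg₁ : g₁ ≠ 0 := by simpa using hli.ne_zero 0
  have hg₂ : g₂ ≠ 0 := by simpa using hli.ne_zero 1
  have hc : 0 < ‖g₂‖ ^ 2 * (1 - coh g₁ g₂) :=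
    mul_pos (by positivity) (sub_pos.2 (coh_lt_one hli))
  rw [inner_sub_proj1_smul_add_smul, inner_sub_proj1_self hg₁, inner_sub_proj1 g₁ g₂ g₃,
    mul_assoc (‖g₁‖ ^ 2), mul_assoc (4 : ℝ)]
  generalize ‖g₂‖ ^ 2 * (1 - coh g₁ g₂) = c at hc ⊢
  have hg₁' : (‖g₁‖ : ℂ) ≠ 0 := by simpa using hg₁
  have hc' : (c : ℂ) ≠ 0 := by exact_mod_cast hc.ne'
  set z := α₂ + α₃ * ((((‖g₁‖ ^ 2 : ℝ) : ℂ) * inner ℂ g₂ g₃ - inner ℂ g₂ g₁ * inner ℂ g₁ g₃)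
    / ((‖g₁‖ ^ 2 * c : ℝ) : ℂ))
  have hnum : α₂ * c + α₃ * (inner ℂ g₂ g₃ - inner ℂ g₂ g₁ * inner ℂ g₁ g₃ / (‖g₁‖ : ℂ) ^ 2)
      = c * z := by
    push_cast [z]
    field_simp
  rw [hnum, norm_mul, Complex.norm_real, Real.norm_of_nonneg hc.le]
  push_cast
  field_simp

theorem noncentrality_second_target {N : ℕ} (g₁ g₂ g₃ : EuclideanSpace ℂ (Fin N))
    (h₁ : g₁ ≠ 0) (h₂ : g₂ ≠ 0) (hli : LinearIndependent ℂ ![g₁, g₂])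
    (α₂ α₃ : ℂ) (σ : ℝ) (hσ : 0 < σ) :
    let s : EuclideanSpace ℂ (Fin N) := α₂ • g₂ + α₃ • g₃
    (4 / ((σ : ℂ) ^ 2 * (inner ℂ g₂ (g₂ - proj1 g₁ g₂) : ℂ)))
        * ((‖(inner ℂ g₂ (s - proj1 g₁ s) : ℂ)‖ ^ 2 : ℝ) : ℂ)
      = ((4 * ‖g₂‖ ^ 2 * (1 - coh g₁ g₂) / σ ^ 2
          * ‖α₂ + α₃ * ((((‖g₁‖ ^ 2 : ℝ) : ℂ) * (inner ℂ g₂ g₃ : ℂ)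
              - (inner ℂ g₂ g₁ : ℂ) * (inner ℂ g₁ g₃ : ℂ))
            / ((‖g₁‖ ^ 2 * ‖g₂‖ ^ 2 * (1 - coh g₁ g₂) : ℝ) : ℂ))‖ ^ 2 : ℝ) : ℂ) :=
  noncentrality_second_target_general g₁ g₂ g₃ hli α₂ α₃ σ
end

section
/- Let ζ > 0, v > 0, and let Z₁, Z₂ be independent real random variables, each Gaussian with mean 0 and variance ζ + v/2. Then for every p_fa ∈ (0, 1), setting γ_th = −2 log(p_fa), one has P(2(Z₁² + Z₂²)/v ≥ γ_th) = exp(log(p_fa) / (2ζ/v + 1)). (This is the marginal detection probability of Corollary 1: the detection statistic γ_l = 2|α̂_l|²/Var[α̂_l] with α̂_l the sum of a circularly-symmetric complex Gaussian signal term of per-component variance ζ and an independent circularly-symmetric complex Gaussian noise term of per-component variance v/2 has exceedance probability p_d,l = exp(log(p_fa)/(A_l ζ_l + 1)) at threshold γ_th = −2 log(p_fa).) -/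
/-!
In polar coordinates the joint density of two independent centred Gaussians of variance `s`
depends only on `u = r²`, and `r dr dθ = dθ du / 2` turns it into the exponential density
`(2s)⁻¹ exp (-u / (2s))` of `Z₁² + Z₂²`. Hence `P(Z₁² + Z₂² ≥ c) = exp (-c / (2s))`; with
`s = ζ + v/2` and `c = -v log p_fa` this is `exp (log p_fa / (2ζ/v + 1))`.
-/

open MeasureTheory ProbabilityTheory Real Set
open scoped NNReal ENNReal

theorem integral_comp_sq_add_sq {E : Type*} [NormedAddCommGroup E] [NormedSpace ℝ E]
    (f : ℝ → E) :
    ∫ p : ℝ × ℝ, f (p.1 ^ 2 + p.2 ^ 2) = π • ∫ u in Ioi 0, f u := by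
  have radial : ∀ p : ℝ × ℝ,
      p.1 • f ((polarCoord.symm p).1 ^ 2 + (polarCoord.symm p).2 ^ 2) = p.1 • f (p.1 ^ 2) := by
    intro p
    congr 2
    simp only [polarCoord_symm_apply]
    linear_combination p.1 ^ 2 * sin_sq_add_cos_sq p.2
  have substitution : ∫ r in Ioi 0, r • f (r ^ 2) = (2 : ℝ)⁻¹ • ∫ u in Ioi 0, f u := by
    rw [← integral_comp_rpow_Ioi_of_pos (g := f) two_pos, ← integral_smul]
    refine setIntegral_congr_fun measurableSet_Ioi fun r _ => ?_
    norm_num [smul_smul, ← mul_assoc]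
  rw [← integral_comp_polarCoord_symm, polarCoord_target, Measure.volume_eq_prod,
    ← Measure.prod_restrict]
  simp_rw [radial]
  rw [integral_fun_fst (fun r => r • f (r ^ 2)), substitution, smul_smul,
    measureReal_restrict_apply_univ, volume_real_Ioo_of_le (by linarith [pi_pos])]
  congr 1
  ring

theorem integral_Ici_exp_neg_div {b : ℝ} (hb : 0 < b) (c : ℝ) :
    ∫ u in Ici c, exp (-u / b) = b * exp (-c / b) := by
  have hexp : ∀ u, exp (-u / b) = exp (-b⁻¹ * u) := fun u => by ring_nf
  simp_rw [integral_Ici_eq_integral_Ioi, hexp,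
    integral_exp_mul_Ioi (neg_neg_of_pos (inv_pos.mpr hb)) c]
  field_simp

theorem gaussianPDFReal_zero_mul_gaussianPDFReal_zero (v : ℝ≥0) (x y : ℝ) :
    gaussianPDFReal 0 v x * gaussianPDFReal 0 v y
      = (2 * π * v)⁻¹ * exp (-(x ^ 2 + y ^ 2) / (2 * v)) := by
  have hsqrt : (√(2 * π * v))⁻¹ * (√(2 * π * v))⁻¹ = (2 * π * v)⁻¹ := by
    rw [← mul_inv, mul_self_sqrt (by positivity)]
  simp only [gaussianPDFReal, sub_zero]
  rw [mul_mul_mul_comm, hsqrt, ← exp_add, neg_add, add_div]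

theorem gaussianReal_prod_gaussianReal_le_sq_add_sq {v : ℝ≥0} (hv : v ≠ 0) {c : ℝ}
    (hc : 0 ≤ c) :
    ((gaussianReal 0 v).prod (gaussianReal 0 v)) {p | c ≤ p.1 ^ 2 + p.2 ^ 2}
      = ENNReal.ofReal (exp (-c / (2 * v))) := by
  set S : Set (ℝ × ℝ) := {p | c ≤ p.1 ^ 2 + p.2 ^ 2}
  have hS : MeasurableSet S := measurableSet_le measurable_const (by fun_prop)
  set h : ℝ × ℝ → ℝ := fun p => gaussianPDFReal 0 v p.1 * gaussianPDFReal 0 v p.2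
  have h_nonneg : 0 ≤ S.indicator h :=
    indicator_nonneg fun p _ => mul_nonneg (gaussianPDFReal_nonneg _ _ _)
      (gaussianPDFReal_nonneg _ _ _)
  have h_int : Integrable (S.indicator h) :=
    ((integrable_gaussianPDFReal 0 v).mul_prod (integrable_gaussianPDFReal 0 v)).indicator hS
  have h_radial : S.indicator h = fun p => (Ici c).indicator
      (fun u => (2 * π * v)⁻¹ * exp (-u / (2 * v))) (p.1 ^ 2 + p.2 ^ 2) := by
    ext p
    simp only [indicator_apply, S, h, mem_ofPred_eq, mem_Ici,
      gaussianPDFReal_zero_mul_gaussianPDFReal_zero]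
  rw [gaussianReal_of_var_ne_zero _ hv,
    prod_withDensity (measurable_gaussianPDF _ _) (measurable_gaussianPDF _ _),
    withDensity_apply _ hS, ← lintegral_indicator hS]
  have h_ofReal : S.indicator (fun p => gaussianPDF 0 v p.1 * gaussianPDF 0 v p.2)
      = fun p => ENNReal.ofReal (S.indicator h p) := by
    ext p
    by_cases hp : p ∈ S <;>
      simp [hp, h, gaussianPDF, ENNReal.ofReal_mul (gaussianPDFReal_nonneg _ _ _)]
  rw [h_ofReal, ← Measure.volume_eq_prod,
    ← ofReal_integral_eq_lintegral_ofReal h_int (ae_of_all _ h_nonneg), h_radial,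
    integral_comp_sq_add_sq, setIntegral_congr_set Ioi_ae_eq_Ici,
    setIntegral_indicator measurableSet_Ici,
    inter_eq_self_of_subset_right (Ici_subset_Ici.mpr hc), integral_const_mul,
    integral_Ici_exp_neg_div (by positivity), smul_eq_mul]
  congr 1
  field_simp

theorem measure_le_sq_add_sq_of_indepFun_gaussianReal {Ω : Type*} [MeasurableSpace Ω]
    {P : Measure Ω} [IsFiniteMeasure P] {X Y : Ω → ℝ} {v : ℝ≥0} (hv : v ≠ 0)
    (hX : P.map X = gaussianReal 0 v) (hY : P.map Y = gaussianReal 0 v) (hXY : IndepFun X Y P)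
    {c : ℝ} (hc : 0 ≤ c) :
    P {ω | c ≤ X ω ^ 2 + Y ω ^ 2} = ENNReal.ofReal (exp (-c / (2 * v))) := by
  have hX_meas : AEMeasurable X P := .of_map_ne_zero (by simp [hX, NeZero.ne])
  have hY_meas : AEMeasurable Y P := .of_map_ne_zero (by simp [hY, NeZero.ne])
  have h_law : P.map (fun ω => (X ω, Y ω)) = (gaussianReal 0 v).prod (gaussianReal 0 v) := by
    rw [(indepFun_iff_map_prod_eq_prod_map_map hX_meas hY_meas).mp hXY, hX, hY]
  rw [← gaussianReal_prod_gaussianReal_le_sq_add_sq hv hc, ← h_law,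
    Measure.map_apply_of_aemeasurable (hX_meas.prodMk hY_meas)
      (measurableSet_le measurable_const (by fun_prop))]
  rfl

theorem expected_detection_probability_gaussian {Ω : Type*} [MeasurableSpace Ω]
    (P : Measure Ω) [IsProbabilityMeasure P]
    (ζ v : ℝ) (hζ : 0 < ζ) (hv : 0 < v)
    (Z₁ Z₂ : Ω → ℝ)
    (hmap₁ : Measure.map Z₁ P = gaussianReal 0 (Real.toNNReal (ζ + v / 2)))
    (hmap₂ : Measure.map Z₂ P = gaussianReal 0 (Real.toNNReal (ζ + v / 2)))
    (hind : IndepFun Z₁ Z₂ P)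
    (p_fa : ℝ) (hp : p_fa ∈ Set.Ioo (0 : ℝ) 1) :
    P {ω | -2 * Real.log p_fa ≤ 2 * (Z₁ ω ^ 2 + Z₂ ω ^ 2) / v}
      = ENNReal.ofReal (Real.exp (Real.log p_fa / (2 * ζ / v + 1))) := by
  have h_var : 0 < ζ + v / 2 := by positivity
  have h_log : Real.log p_fa < 0 := Real.log_neg hp.1 hp.2
  have h_event : {ω | -2 * Real.log p_fa ≤ 2 * (Z₁ ω ^ 2 + Z₂ ω ^ 2) / v}
      = {ω | -v * Real.log p_fa ≤ Z₁ ω ^ 2 + Z₂ ω ^ 2} := by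
    ext ω
    simp only [mem_ofPred_eq, le_div_iff₀ hv]
    constructor <;> intro h <;> linarith
  rw [h_event, measure_le_sq_add_sq_of_indepFun_gaussianReal (by simpa using h_var) hmap₁ hmap₂
    hind (by nlinarith), Real.coe_toNNReal _ h_var.le]
  congr 2
  field_simp
end
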